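/- arXiv:0712.3333 — 3 statements merged into one kernel-verified Lean document; each statement's English description precedes it below -/
import Mathlib

section
/- Let G be a finite simple graph, (i,j) ∈ E an edge of G, and let R ⊆ V(G^{(i,j)}) be a vertex cover of the reduced graph G^{(i,j)}. Define R* = R ∪ Δ_ij ∪ {j} if D_i ⊆ R, and R* = R ∪ Δ_ij ∪ {i} otherwise. Then R* is a vertex cover of G. -/
variable {V : Type*} [Fintype V] [DecidableEq V]

/-- `S` is a vertex cover of `G`: every edge has at least one endpoint in `S`. -/
def IsVertexCover (G : SimpleGraph V) (S : Finset V) : Prop :=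
  ∀ ⦃a b : V⦄, G.Adj a b → a ∈ S ∨ b ∈ S

/-- `Δ_ij`: the common neighbours of `i` and `j`. -/
def DeltaSet (G : SimpleGraph V) [DecidableRel G.Adj] (i j : V) : Finset V :=
  Finset.univ.filter fun k => G.Adj i k ∧ G.Adj j k

/-- `D_i`: the neighbours of `i` other than `j` that are not common neighbours
of `i` and `j`.  (`D_j` is `DSide G j i`.) -/
def DSide (G : SimpleGraph V) [DecidableRel G.Adj] (i j : V) : Finset V :=
  Finset.univ.filter fun s => G.Adj i s ∧ s ≠ j ∧ s ∉ DeltaSet G i j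

/-- The removed vertex set `{i, j} ∪ Δ_ij`. -/
def RemovedSet (G : SimpleGraph V) [DecidableRel G.Adj] (i j : V) : Finset V :=
  insert i (insert j (DeltaSet G i j))

/-- The reduced graph `G^{(i,j)}`: vertices outside `{i,j} ∪ Δ_ij`, with the edges of
`G` between such vertices together with all pairs `(s,t)`, `s ∈ D_i`, `t ∈ D_j`. -/
def ReducedGraph (G : SimpleGraph V) [DecidableRel G.Adj] (i j : V) : SimpleGraph V :=
  SimpleGraph.fromRel fun a b =>
    a ∉ RemovedSet G i j ∧ b ∉ RemovedSet G i j ∧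
      (G.Adj a b ∨ (a ∈ DSide G i j ∧ b ∈ DSide G j i))

/-- `R` is a vertex cover of the reduced graph `G^{(i,j)}`: it is a subset of the
vertex set of `G^{(i,j)}` and covers all its edges. -/
def IsReducedVC (G : SimpleGraph V) [DecidableRel G.Adj] (i j : V) (R : Finset V) :
    Prop :=
  (∀ v ∈ R, v ∉ RemovedSet G i j) ∧
    ∀ ⦃a b : V⦄, (ReducedGraph G i j).Adj a b → a ∈ R ∨ b ∈ R

/-- `R* = R ∪ Δ_ij ∪ {j}` if `D_i ⊆ R`, and `R* = R ∪ Δ_ij ∪ {i}` otherwise. -/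
def RStar (G : SimpleGraph V) [DecidableRel G.Adj] (i j : V) (R : Finset V) :
    Finset V :=
  if DSide G i j ⊆ R then R ∪ DeltaSet G i j ∪ {j} else R ∪ DeltaSet G i j ∪ {i}

section DeltaSet

variable {W : Type*} [Fintype W] (G : SimpleGraph W) [DecidableRel G.Adj] {a : W}

@[simp]
lemma mem_deltaSet {i j : W} : a ∈ DeltaSet G i j ↔ G.Adj i a ∧ G.Adj j a := by
  simp [DeltaSet]

lemma deltaSet_comm (i j : W) : DeltaSet G i j = DeltaSet G j i := by
  ext; simp [and_comm]

end DeltaSet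

section ReducedGraph

variable (G : SimpleGraph V) [DecidableRel G.Adj] {i j a b s t : V}

@[simp]
lemma mem_dSide : a ∈ DSide G i j ↔ G.Adj i a ∧ a ≠ j ∧ a ∉ DeltaSet G i j := by
  simp [DSide]

lemma removedSet_comm (i j : V) : RemovedSet G i j = RemovedSet G j i := by
  rw [RemovedSet, RemovedSet, Finset.insert_comm, deltaSet_comm]

lemma reducedGraph_comm (i j : V) : ReducedGraph G i j = ReducedGraph G j i := by
  ext a b
  simp only [ReducedGraph, SimpleGraph.fromRel_adj, removedSet_comm G i j, G.adj_comm a b]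
  tauto

variable {G}

lemma reducedGraph_adj_of_adj (hab : G.Adj a b) (ha : a ∉ RemovedSet G i j)
    (hb : b ∉ RemovedSet G i j) : (ReducedGraph G i j).Adj a b :=
  ⟨hab.ne, .inl ⟨ha, hb, .inl hab⟩⟩

lemma notMem_removedSet_of_mem_dSide (hs : s ∈ DSide G i j) : s ∉ RemovedSet G i j := by
  rw [mem_dSide] at hs
  simp [RemovedSet, hs.2.1, hs.2.2, hs.1.ne']

lemma reducedGraph_adj_of_mem_dSide (hs : s ∈ DSide G i j) (ht : t ∈ DSide G j i) :
    (ReducedGraph G i j).Adj s t := by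
  obtain ⟨his, -, hsΔ⟩ := (mem_dSide G).1 hs
  have hst : s ≠ t := by
    rintro rfl
    exact hsΔ ((mem_deltaSet G).2 ⟨his, ((mem_dSide G).1 ht).1⟩)
  refine ⟨hst, .inl ⟨notMem_removedSet_of_mem_dSide hs, ?_, .inr ⟨hs, ht⟩⟩⟩
  rw [removedSet_comm]
  exact notMem_removedSet_of_mem_dSide ht

lemma adj_cases_of_notMem_insert_deltaSet (hab : G.Adj a b) (ha : a ∉ insert j (DeltaSet G i j))
    (hb : b ∉ insert j (DeltaSet G i j)) :
    (a = i ∧ b ∈ DSide G i j) ∨ (b = i ∧ a ∈ DSide G i j) ∨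
      (ReducedGraph G i j).Adj a b := by
  rw [Finset.mem_insert, not_or] at ha hb
  by_cases hai : a = i
  · subst hai
    exact .inl ⟨rfl, (mem_dSide G).2 ⟨hab, hb.1, hb.2⟩⟩
  by_cases hbi : b = i
  · subst hbi
    exact .inr (.inl ⟨rfl, (mem_dSide G).2 ⟨hab.symm, ha.1, ha.2⟩⟩)
  refine .inr (.inr (reducedGraph_adj_of_adj hab ?_ ?_)) <;> simp [RemovedSet, *]

end ReducedGraph

lemma IsVertexCover.of_adj_of_notMem {W : Type*} {G : SimpleGraph W} {S : Finset W}
    (h : ∀ ⦃a b⦄, G.Adj a b → a ∉ S → b ∉ S → False) : IsVertexCover G S :=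
  fun _ _ hab => by by_contra! hS; exact h hab hS.1 hS.2

lemma Finset.notMem_union_union_singleton {α : Type*} [DecidableEq α] {A B : Finset α}
    {x v : α} : v ∉ A ∪ B ∪ {x} ↔ v ∉ A ∧ v ∉ insert x B := by
  simp only [Finset.mem_union, Finset.mem_singleton, Finset.mem_insert]
  tauto

section Cover

variable {G : SimpleGraph V} [DecidableRel G.Adj] {i j : V} {R : Finset V}

lemma isVertexCover_union_deltaSet_union_of_dSide_subset
    (hR : IsVertexCover (ReducedGraph G i j) R) (hD : DSide G i j ⊆ R) :
    IsVertexCover G (R ∪ DeltaSet G i j ∪ {j}) := by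
  refine .of_adj_of_notMem fun a b hab ha hb => ?_
  rw [Finset.notMem_union_union_singleton] at ha hb
  rcases adj_cases_of_notMem_insert_deltaSet hab ha.2 hb.2 with ⟨-, hbD⟩ | ⟨-, haD⟩ | hred
  · exact hb.1 (hD hbD)
  · exact ha.1 (hD haD)
  · exact (hR hred).elim ha.1 hb.1

/-- A vertex `s ∈ D_i` missing from `R` forces `R` to contain all of `D_j`, since `s` is joined
to every vertex of `D_j` in `G^{(i,j)}`. -/
lemma isVertexCover_union_deltaSet_union_of_mem_dSide_of_notMem {s : V}
    (hR : IsVertexCover (ReducedGraph G i j) R) (hs : s ∈ DSide G i j) (hsR : s ∉ R) :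
    IsVertexCover G (R ∪ DeltaSet G i j ∪ {i}) := by
  refine .of_adj_of_notMem fun a b hab ha hb => ?_
  rw [Finset.notMem_union_union_singleton, deltaSet_comm] at ha hb
  rcases adj_cases_of_notMem_insert_deltaSet hab ha.2 hb.2 with ⟨-, hbD⟩ | ⟨-, haD⟩ | hred
  · exact (hR (reducedGraph_adj_of_mem_dSide hs hbD)).elim hsR hb.1
  · exact (hR (reducedGraph_adj_of_mem_dSide hs haD)).elim hsR ha.1
  · rw [← reducedGraph_comm] at hred
    exact (hR hred).elim ha.1 hb.1

end Cover

theorem rstar_isVertexCover_general (G : SimpleGraph V) [DecidableRel G.Adj] (i j : V)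
    (R : Finset V) (hR : IsReducedVC G i j R) :
    IsVertexCover G (RStar G i j R) := by
  unfold RStar
  split_ifs with hD
  · exact isVertexCover_union_deltaSet_union_of_dSide_subset hR.2 hD
  · obtain ⟨s, hs, hsR⟩ := Finset.not_subset.1 hD
    exact isVertexCover_union_deltaSet_union_of_mem_dSide_of_notMem hR.2 hs hsR

/-- If `(i,j)` is an edge of `G` and `R` is a vertex cover of the reduced graph
`G^{(i,j)}`, then `R*` is a vertex cover of `G`. -/
theorem rstar_isVertexCover (G : SimpleGraph V) [DecidableRel G.Adj] (i j : V)
    (hij : G.Adj i j) (R : Finset V) (hR : IsReducedVC G i j R) :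
    IsVertexCover G (RStar G i j R) :=
  rstar_isVertexCover_general G i j R hR
end

section
/- Let G be a finite simple graph, (i,j) ∈ E, and let V⁰ be a vertex cover of G with i ∈ V⁰ and j ∉ V⁰. Then Δ_ij ⊆ V⁰ and V¹ = V⁰ \ ({i} ∪ Δ_ij) is a vertex cover of the reduced graph G^{(i,j)}. -/
variable {V : Type*} [Fintype V] [DecidableEq V]

/-
A vertex cover missing `j` contains every neighbour of `j`, in particular `Δ_ij` and `D_j`.
On the vertices of `G^{(i,j)}`, `V¹` agrees with `V⁰`, so it suffices that `V⁰` covers every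
edge of `G^{(i,j)}`: the edges of `G` because `V⁰` is a cover, the new edges `(s, t)` because
`t ∈ D_j ⊆ V⁰`.
-/

theorem IsVertexCover.mem_of_adj_of_notMem {α : Type*} {G : SimpleGraph α} {S : Finset α}
    (hS : IsVertexCover G S) {j k : α} (hj : j ∉ S) (hjk : G.Adj j k) : k ∈ S :=
  (hS hjk).resolve_left hj

theorem adj_right_of_mem_deltaSet {α : Type*} [Fintype α] {G : SimpleGraph α}
    [DecidableRel G.Adj] {i j k : α} (hk : k ∈ DeltaSet G i j) : G.Adj j k :=
  (Finset.mem_filter.mp hk).2.2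

section Reduced

variable {G : SimpleGraph V} [DecidableRel G.Adj] {i j : V}

theorem adj_of_mem_dSide {s : V} (hs : s ∈ DSide G i j) : G.Adj i s :=
  (Finset.mem_filter.mp hs).2.1

theorem mem_sdiff_insert_deltaSet_iff {S : Finset V} (hj : j ∉ S) {v : V} :
    v ∈ S \ insert i (DeltaSet G i j) ↔ v ∈ S ∧ v ∉ RemovedSet G i j := by
  simp only [RemovedSet, Finset.mem_sdiff, Finset.mem_insert, not_or]
  constructor
  · rintro ⟨hvS, hvi, hvΔ⟩
    exact ⟨hvS, hvi, fun hvj => hj (hvj ▸ hvS), hvΔ⟩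
  · rintro ⟨hvS, hvi, -, hvΔ⟩
    exact ⟨hvS, hvi, hvΔ⟩

theorem reducedGraph_adj_cases {a b : V} (hab : (ReducedGraph G i j).Adj a b) :
    a ∉ RemovedSet G i j ∧ b ∉ RemovedSet G i j ∧
      (G.Adj a b ∨ b ∈ DSide G j i ∨ a ∈ DSide G j i) := by
  rcases (SimpleGraph.fromRel_adj _ _ _).mp hab |>.2 with
    ⟨ha, hb, hG | ⟨-, hbD⟩⟩ | ⟨hb, ha, hG | ⟨-, haD⟩⟩
  · exact ⟨ha, hb, .inl hG⟩
  · exact ⟨ha, hb, .inr (.inl hbD)⟩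
  · exact ⟨ha, hb, .inl hG.symm⟩
  · exact ⟨ha, hb, .inr (.inr haD)⟩

theorem IsVertexCover.reducedGraph_adj {S : Finset V} (hS : IsVertexCover G S) (hj : j ∉ S)
    {a b : V} (hab : (ReducedGraph G i j).Adj a b) : a ∈ S ∨ b ∈ S := by
  rcases (reducedGraph_adj_cases hab).2.2 with hG | hbD | haD
  · exact hS hG
  · exact .inr (hS.mem_of_adj_of_notMem hj (adj_of_mem_dSide hbD))
  · exact .inl (hS.mem_of_adj_of_notMem hj (adj_of_mem_dSide haD))

end Reduced

theorem cover_diff_isReducedVC_general (G : SimpleGraph V) [DecidableRel G.Adj] (i j : V)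
    (V0 : Finset V) (hV0 : IsVertexCover G V0)
    (hj : j ∉ V0) :
    DeltaSet G i j ⊆ V0 ∧
      IsReducedVC G i j (V0 \ insert i (DeltaSet G i j)) := by
  refine ⟨fun k hk => hV0.mem_of_adj_of_notMem hj (adj_right_of_mem_deltaSet hk), ?_, ?_⟩
  · exact fun v hv => ((mem_sdiff_insert_deltaSet_iff hj).mp hv).2
  · intro a b hab
    obtain ⟨ha, hb, -⟩ := reducedGraph_adj_cases hab
    simp only [mem_sdiff_insert_deltaSet_iff hj]
    rcases hV0.reducedGraph_adj hj hab with haS | hbS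
    · exact .inl ⟨haS, ha⟩
    · exact .inr ⟨hbS, hb⟩

/-- If `(i,j)` is an edge of `G` and `V⁰` is a vertex cover of `G` with `i ∈ V⁰` and
`j ∉ V⁰`, then `Δ_ij ⊆ V⁰` and `V¹ = V⁰ \ ({i} ∪ Δ_ij)` is a vertex cover of the
reduced graph `G^{(i,j)}`. -/
theorem cover_diff_isReducedVC (G : SimpleGraph V) [DecidableRel G.Adj] (i j : V)
    (hij : G.Adj i j) (V0 : Finset V) (hV0 : IsVertexCover G V0)
    (hi : i ∈ V0) (hj : j ∉ V0) :
    DeltaSet G i j ⊆ V0 ∧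
      IsReducedVC G i j (V0 \ insert i (DeltaSet G i j)) :=
  cover_diff_isReducedVC_general G i j V0 hV0 hj
end

section
/- Let G be a finite simple graph, let x* be an optimal solution of the LP relaxation LPR of the vertex cover problem on G, let I₀ = {i : x*_i = 0}, I₁ = {i : x*_i = 1}, and let Ḡ = G \ (I₀ ∪ I₁) be the induced subgraph on V \ (I₀ ∪ I₁). If R is a vertex cover of Ḡ, then R ∪ I₁ is a vertex cover of G. -/
variable {V : Type*} [Fintype V] [DecidableEq V]

/-- `x` is feasible for the LP relaxation LPR of the vertex cover problem on `G`:
`x_i + x_j ≥ 1` for every edge `(i,j)` and `x_i ≥ 0` for all `i`. -/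
def LPFeasible (G : SimpleGraph V) (x : V → ℝ) : Prop :=
  (∀ i : V, 0 ≤ x i) ∧ ∀ ⦃i j : V⦄, G.Adj i j → 1 ≤ x i + x j

/-- `x` is an optimal solution of the LP relaxation LPR on `G`. -/
def LPOptimal (G : SimpleGraph V) (x : V → ℝ) : Prop :=
  LPFeasible G x ∧ ∀ y : V → ℝ, LPFeasible G y → ∑ i : V, x i ≤ ∑ i : V, y i

/-- `G \ D`: the induced subgraph of `G` on `V \ D`, viewed as a graph on the same
vertex type by deleting all edges meeting `D`. -/
def DeleteVerts (G : SimpleGraph V) (D : Finset V) : SimpleGraph V where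
  Adj a b := G.Adj a b ∧ a ∉ D ∧ b ∉ D
  symm := ⟨fun _ _ h => ⟨h.1.symm, h.2.2, h.2.1⟩⟩
  loopless := ⟨fun a h => G.loopless.irrefl a h.1⟩

/-! Truncating an LP solution at `1` keeps it feasible, so an optimal `x*` satisfies `x* ≤ 1`.
Hence every neighbour of a vertex of `I₀` lies in `I₁`, and the edges avoiding `I₀ ∪ I₁`
are exactly those of `Ḡ`, covered by `R`. -/

theorem LPFeasible.min_one {V : Type*} {G : SimpleGraph V} {x : V → ℝ} (hx : LPFeasible G x) :
    LPFeasible G (fun i => min (x i) 1) := by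
  obtain ⟨hnonneg, hedge⟩ := hx
  refine ⟨fun i => le_min (hnonneg i) zero_le_one, fun i j hij => ?_⟩
  have hi := hnonneg i
  have hj := hnonneg j
  have := hedge hij
  simp only [min_def]
  split_ifs <;> linarith

theorem LPOptimal.le_one {V : Type*} [Fintype V] {G : SimpleGraph V} {x : V → ℝ}
    (hx : LPOptimal G x) (i : V) : x i ≤ 1 := by
  by_contra! hi
  have hlt : ∑ j, min (x j) 1 < ∑ j, x j :=
    Finset.sum_lt_sum (fun j _ => min_le_left _ _)
      ⟨i, Finset.mem_univ i, by simpa [min_eq_right hi.le] using hi⟩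
  exact (hx.2 _ hx.1.min_one).not_gt hlt

theorem LPOptimal.eq_one_of_adj_of_eq_zero {V : Type*} [Fintype V] {G : SimpleGraph V}
    {x : V → ℝ} (hx : LPOptimal G x) {a b : V} (hab : G.Adj a b) (ha : x a = 0) : x b = 1 :=
  le_antisymm (hx.le_one b) (by linarith [hx.1.2 hab])

theorem IsVertexCover.union_of_deleteVerts {V : Type*} [DecidableEq V] {G : SimpleGraph V}
    {D R S : Finset V} (hR : IsVertexCover (DeleteVerts G D) R)
    (hD : ∀ ⦃a b : V⦄, G.Adj a b → a ∈ D → a ∈ S ∨ b ∈ S) :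
    IsVertexCover G (R ∪ S) := by
  intro a b hab
  simp only [Finset.mem_union]
  by_cases ha : a ∈ D
  · have := hD hab ha
    tauto
  by_cases hb : b ∈ D
  · have := hD hab.symm hb
    tauto
  have := hR ⟨hab, ha, hb⟩
  tauto

/-- Let `x*` be an optimal solution of LPR on `G`, `I₀ = {i : x*_i = 0}`,
`I₁ = {i : x*_i = 1}` and `Ḡ = G \ (I₀ ∪ I₁)`.  If `R` is a vertex cover of `Ḡ`,
then `R ∪ I₁` is a vertex cover of `G`. -/
theorem nemhauser_trotter_cover (G : SimpleGraph V) (xstar : V → ℝ)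
    (hx : LPOptimal G xstar) (I0 I1 : Finset V)
    (hI0 : ∀ i : V, i ∈ I0 ↔ xstar i = 0) (hI1 : ∀ i : V, i ∈ I1 ↔ xstar i = 1)
    (R : Finset V) (hR : IsVertexCover (DeleteVerts G (I0 ∪ I1)) R) :
    IsVertexCover G (R ∪ I1) := by
  refine hR.union_of_deleteVerts fun a b hab ha => ?_
  rcases Finset.mem_union.1 ha with ha0 | ha1
  · exact Or.inr ((hI1 b).2 (hx.eq_one_of_adj_of_eq_zero hab ((hI0 a).1 ha0)))
  · exact Or.inl ha1
end
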